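/- arXiv:2510.04672 — 2 statements merged into one kernel-verified Lean document; each statement's English description precedes it below -/
import Mathlib

section
/- With the dual modular ρ^m_{V,φ} of Definition above, λ ↦ ρ^m_{V,φ}(λu) is left-continuous at λ = 1: lim_{λ→1⁻} ρ^m_{V,φ}(λu) = ρ^m_{V,φ}(u) for every u ∈ L¹(Ω;ℝ^m). -/
open MeasureTheory Filter Topology NNReal ENNReal

noncomputable section

/-- Divergence of a `C¹` vector field `w : ℝⁿ → ℝⁿ`. -/
def divg {n : ℕ} (w : (Fin n → ℝ) → (Fin n → ℝ)) (x : Fin n → ℝ) : ℝ :=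
  ∑ i, fderiv ℝ w x (Pi.single i 1) i

/-- `C¹` vector fields compactly supported in the open set `Ω`, i.e. `C¹_0(Ω; ℝⁿ)`. -/
def TestFun {n : ℕ} (Ω : Set (Fin n → ℝ)) (w : (Fin n → ℝ) → (Fin n → ℝ)) : Prop :=
  ContDiff ℝ 1 w ∧ HasCompactSupport w ∧ tsupport w ⊆ Ω

/-- A weak Φ-function on `Ω`: measurable in `x`, increasing in `t`, vanishing (continuously)
at `0`, tending to `∞`, and with `t ↦ φ(x,t)/t` `L`-almost increasing uniformly in `x`. -/
def IsWeakPhi {n : ℕ} (Ω : Set (Fin n → ℝ)) (φ : (Fin n → ℝ) → ℝ≥0 → ℝ≥0∞) : Prop :=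
  (∀ t, Measurable fun x => φ x t) ∧
  (∀ x ∈ Ω, Monotone (φ x)) ∧
  (∀ x ∈ Ω, φ x 0 = 0 ∧ Tendsto (φ x) (𝓝[>] 0) (𝓝 0) ∧ Tendsto (φ x) atTop (𝓝 ⊤)) ∧
  (∃ L : ℝ≥0, 1 ≤ L ∧ ∀ x ∈ Ω, ∀ s t : ℝ≥0, 0 < s → s ≤ t →
      φ x s / (s : ℝ≥0∞) ≤ (L : ℝ≥0∞) * (φ x t / (t : ℝ≥0∞)))

/-- The conjugate Φ-function `φ*(x,s) = sup_{t ≥ 0} (s t − φ(x,t))`. -/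
def phiStar {n : ℕ} (φ : (Fin n → ℝ) → ℝ≥0 → ℝ≥0∞) (x : Fin n → ℝ) (s : ℝ≥0) : ℝ≥0∞ :=
  ⨆ t : ℝ≥0, (((s * t : ℝ≥0) : ℝ≥0∞) - φ x t)

/-- Euclidean (Frobenius) norm of the `m × n`-matrix field `w` at `x`. -/
def frob {n m : ℕ} (w : Fin m → (Fin n → ℝ) → (Fin n → ℝ)) (x : Fin n → ℝ) : ℝ :=
  Real.sqrt (∑ α, ∑ i, (w α x i) ^ 2)

/-- The dual modular
`ρ(u) = sup { ∫_Ω (Σ_α u_α div w_α − φ*(x,|w|)) dx : w ∈ [C¹_0(Ω;ℝⁿ)]^m }`. -/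
def dualModular {n m : ℕ} (Ω : Set (Fin n → ℝ)) (φ : (Fin n → ℝ) → ℝ≥0 → ℝ≥0∞)
    (u : Fin m → (Fin n → ℝ) → ℝ) : EReal :=
  ⨆ w ∈ {w : Fin m → (Fin n → ℝ) → (Fin n → ℝ) | ∀ α, TestFun Ω (w α)},
    (((∫ x in Ω, ∑ α, u α x * divg (w α) x) : ℝ) : EReal)
      - ((∫⁻ x in Ω, phiStar φ x (Real.toNNReal (frob w x))) : ℝ≥0∞)

/-- The Luxemburg quasinorm of `g` in the conjugate Orlicz space `L^{φ*}(Ω)`. -/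
def luxNormStar {n : ℕ} (Ω : Set (Fin n → ℝ)) (φ : (Fin n → ℝ) → ℝ≥0 → ℝ≥0∞)
    (g : (Fin n → ℝ) → ℝ) : ℝ :=
  sInf {l : ℝ | 0 < l ∧ ∫⁻ x in Ω, phiStar φ x (Real.toNNReal (|g x| / l)) ≤ 1}

/-- `V^m_φ(u,Ω) = sup { Σ_α ∫_Ω u_α div w_α dx : w ∈ [C¹_0(Ω;ℝⁿ)]^m, ‖w‖_{φ*} ≤ 1 }`. -/
def Vphi {n m : ℕ} (Ω : Set (Fin n → ℝ)) (φ : (Fin n → ℝ) → ℝ≥0 → ℝ≥0∞)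
    (u : Fin m → (Fin n → ℝ) → ℝ) : EReal :=
  ⨆ w ∈ {w : Fin m → (Fin n → ℝ) → (Fin n → ℝ) |
      (∀ α, TestFun Ω (w α)) ∧ luxNormStar Ω φ (frob w) ≤ 1},
    (((∫ x in Ω, ∑ α, u α x * divg (w α) x) : ℝ) : EReal)

/-- The associate-space norm `‖g‖_{(L^{φ*})'} = sup_{‖h‖_{φ*} ≤ 1} ∫_Ω |g| h dx`. -/
def assocNormStar {n : ℕ} (Ω : Set (Fin n → ℝ)) (φ : (Fin n → ℝ) → ℝ≥0 → ℝ≥0∞)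
    (g : (Fin n → ℝ) → ℝ) : EReal :=
  ⨆ h ∈ {h : (Fin n → ℝ) → ℝ | Measurable h ∧ (∀ x, 0 ≤ h x) ∧ luxNormStar Ω φ h ≤ 1},
    (((∫ x in Ω, |g x| * h x) : ℝ) : EReal)

/-- The dual modular is left-continuous: `lim_{λ→1⁻} ρ(λu) = ρ(u)`. -/
theorem stmt7 {n m : ℕ} (Ω : Set (Fin n → ℝ)) (hΩo : IsOpen Ω)
    (hΩb : Bornology.IsBounded Ω)
    (φ : (Fin n → ℝ) → ℝ≥0 → ℝ≥0∞) (hφ : IsWeakPhi Ω φ)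
    (u : Fin m → (Fin n → ℝ) → ℝ) (hu : ∀ α, IntegrableOn (u α) Ω) :
    Tendsto (fun l : ℝ => dualModular Ω φ (fun α x => l * u α x)) (𝓝[<] (1 : ℝ))
      (𝓝 (dualModular Ω φ u)) := by
  classical
  set S := {w : Fin m → (Fin n → ℝ) → (Fin n → ℝ) | ∀ α, TestFun Ω (w α)} with hS
  set A : (Fin m → (Fin n → ℝ) → (Fin n → ℝ)) → ℝ :=
    fun w => ∫ x in Ω, ∑ α, u α x * divg (w α) x with hAdef
  set B : (Fin m → (Fin n → ℝ) → (Fin n → ℝ)) → ℝ≥0∞ :=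
    fun w => ∫⁻ x in Ω, phiStar φ x (Real.toNNReal (frob w x)) with hBdef
  have hAl : ∀ (l : ℝ) (w : Fin m → (Fin n → ℝ) → (Fin n → ℝ)),
      (∫ x in Ω, ∑ α, (l * u α x) * divg (w α) x) = l * A w := by
    intro l w
    rw [hAdef, ← integral_const_mul]
    congr 1
    funext x
    rw [Finset.mul_sum]
    exact Finset.sum_congr rfl fun α _ => by ring
  have hρeq : ∀ l : ℝ, dualModular Ω φ (fun α x => l * u α x) =
      ⨆ w ∈ S, (((l * A w : ℝ) : EReal) - ((B w : ℝ≥0∞) : EReal)) := by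
    intro l
    unfold dualModular
    refine iSup_congr fun w => iSup_congr fun _ => ?_
    rw [← hAl l w]
  have hρu : dualModular Ω φ u = ⨆ w ∈ S, (((A w : ℝ) : EReal) - ((B w : ℝ≥0∞) : EReal)) := rfl
  -- the zero test field
  have h0S : (fun (_ : Fin m) (_ : Fin n → ℝ) => (0 : Fin n → ℝ)) ∈ S := by
    intro α
    have hts : tsupport (fun (_ : Fin n → ℝ) => (0 : Fin n → ℝ)) = ∅ := by
      simp [tsupport, Function.support]
    refine ⟨contDiff_const, ?_, ?_⟩
    · rw [HasCompactSupport]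
      show IsCompact (tsupport (fun (_ : Fin n → ℝ) => (0 : Fin n → ℝ)))
      rw [hts]; exact isCompact_empty
    · show tsupport (fun (_ : Fin n → ℝ) => (0 : Fin n → ℝ)) ⊆ Ω
      rw [hts]; exact Set.empty_subset _
  have hA0 : A (fun _ _ => (0 : Fin n → ℝ)) = 0 := by
    rw [hAdef]
    have : ∀ x : Fin n → ℝ, ∑ α : Fin m, u α x * divg (fun _ => (0 : Fin n → ℝ)) x = 0 := by
      intro x
      have hd : divg (fun (_ : Fin n → ℝ) => (0 : Fin n → ℝ)) x = 0 := by
        unfold divg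
        simp [fderiv_const]
      simp [hd]
    simp only [this, integral_zero]
  have hB0 : B (fun _ _ => (0 : Fin n → ℝ)) = 0 := by
    rw [hBdef]
    have : ∀ x : Fin n → ℝ, phiStar φ x (Real.toNNReal (frob (fun (_:Fin m) (_:Fin n → ℝ) => (0:Fin n → ℝ)) x)) = 0 := by
      intro x
      have hf : frob (fun (_:Fin m) (_:Fin n → ℝ) => (0:Fin n → ℝ)) x = 0 := by
        unfold frob; simp
      rw [hf]
      simp [phiStar, zero_tsub]
    simp only [this, lintegral_zero]
  have hρ0 : (0 : EReal) ≤ dualModular Ω φ u := by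
    rw [hρu]
    have := le_iSup₂ (f := fun w (_ : w ∈ S) => (((A w : ℝ) : EReal) - ((B w : ℝ≥0∞) : EReal)))
      _ h0S
    refine le_trans ?_ this
    rw [hA0, hB0]
    simp
  have hIoo : Set.Ioo (0:ℝ) 1 ∈ 𝓝[<] (1:ℝ) :=
    Ioo_mem_nhdsLT_of_mem (by constructor <;> norm_num)
  -- limsup ≤ ρ
  have hub : ∀ᶠ l in 𝓝[<] (1:ℝ),
      dualModular Ω φ (fun α x => l * u α x) ≤ dualModular Ω φ u := by
    filter_upwards [hIoo] with l hl
    rw [hρeq l]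
    refine iSup₂_le fun w hw => ?_
    have hwle : ((A w : ℝ) : EReal) - ((B w : ℝ≥0∞) : EReal) ≤ dualModular Ω φ u := by
      rw [hρu]
      exact le_iSup₂ (f := fun w (_ : w ∈ S) => (((A w : ℝ) : EReal) - ((B w : ℝ≥0∞) : EReal)))
        w hw
    rcases le_or_gt (A w) 0 with hA | hA
    · have h1 : ((l * A w : ℝ) : EReal) ≤ ((0:ℝ) : EReal) := by
        apply EReal.coe_le_coe_iff.2
        exact mul_nonpos_of_nonneg_of_nonpos hl.1.le hA
      calc ((l * A w : ℝ) : EReal) - ((B w : ℝ≥0∞) : EReal)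
          ≤ ((0:ℝ) : EReal) - ((B w : ℝ≥0∞) : EReal) := EReal.sub_le_sub h1 le_rfl
        _ ≤ ((0:ℝ) : EReal) - (((0:ℝ≥0∞)) : EReal) :=
            EReal.sub_le_sub le_rfl (EReal.coe_ennreal_nonneg _)
        _ = 0 := by simp
        _ ≤ dualModular Ω φ u := hρ0
    · have h1 : ((l * A w : ℝ) : EReal) ≤ ((A w : ℝ) : EReal) := by
        apply EReal.coe_le_coe_iff.2
        nlinarith [hl.1, hl.2]
      exact le_trans (EReal.sub_le_sub h1 le_rfl) hwle
  have hlimsup : limsup (fun l : ℝ => dualModular Ω φ (fun α x => l * u α x)) (𝓝[<] (1:ℝ))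
      ≤ dualModular Ω φ u := limsup_le_of_le (by isBoundedDefault) hub
  -- ρ ≤ liminf
  have hlb : dualModular Ω φ u ≤
      liminf (fun l : ℝ => dualModular Ω φ (fun α x => l * u α x)) (𝓝[<] (1:ℝ)) := by
    rw [hρu]
    refine iSup₂_le fun w hw => ?_
    rcases eq_or_ne (B w) ⊤ with hB | hB
    · rw [hB, EReal.coe_ennreal_top, EReal.sub_top]
      exact bot_le
    · set b : ℝ≥0 := (B w).toNNReal with hbdef
      have hb : ((b : ℝ≥0∞)) = B w := ENNReal.coe_toNNReal hB
      have hterm : ∀ l : ℝ, ((l * A w : ℝ) : EReal) - ((B w : ℝ≥0∞) : EReal)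
          = (((l * A w - (b:ℝ)) : ℝ) : EReal) := by
        intro l
        rw [← hb, EReal.coe_nnreal_eq_coe_real, ← EReal.coe_sub]
      have hcont : Tendsto (fun l : ℝ => (((l * A w - (b:ℝ)) : ℝ) : EReal)) (𝓝[<] (1:ℝ))
          (𝓝 (((A w - (b:ℝ) : ℝ)) : EReal)) := by
        have hc : Continuous (fun l : ℝ => l * A w - (b:ℝ)) := (continuous_mul_right (A w)).sub continuous_const
        have h1 : Tendsto (fun l : ℝ => l * A w - (b:ℝ)) (𝓝[<] (1:ℝ)) (𝓝 (A w - (b:ℝ))) := by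
          have h2 : Tendsto (fun l : ℝ => l * A w - (b:ℝ)) (𝓝[<] (1:ℝ)) (𝓝 (1 * A w - (b:ℝ))) :=
            (hc.tendsto (1:ℝ)).mono_left (nhdsWithin_le_nhds (s := Set.Iio (1:ℝ)))
          simpa using h2
        exact (continuous_coe_real_ereal.tendsto _).comp h1
      have hliminfeq : liminf (fun l : ℝ => (((l * A w - (b:ℝ) : ℝ)) : EReal)) (𝓝[<] (1:ℝ))
          = (((A w - (b:ℝ) : ℝ)) : EReal) := hcont.liminf_eq
      have hmono : liminf (fun l : ℝ => (((l * A w - (b:ℝ) : ℝ)) : EReal)) (𝓝[<] (1:ℝ))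
          ≤ liminf (fun l : ℝ => dualModular Ω φ (fun α x => l * u α x)) (𝓝[<] (1:ℝ)) := by
        refine liminf_le_liminf (Eventually.of_forall fun l => ?_)
        rw [← hterm l, hρeq l]
        exact le_iSup₂ (f := fun w (_ : w ∈ S) =>
          (((l * A w : ℝ) : EReal) - ((B w : ℝ≥0∞) : EReal))) w hw
      calc ((A w : ℝ) : EReal) - ((B w : ℝ≥0∞) : EReal)
          = (((A w - (b:ℝ) : ℝ)) : EReal) := by
            have h := hterm 1
            rw [one_mul] at h
            exact h
        _ ≤ _ := hliminfeq ▸ hmono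
  exact tendsto_of_le_liminf_of_limsup_le hlb hlimsup

end
end

section
/- Let p : Ω → [1,∞) be continuous, j ≥ 1, f : ℝ^(m×n) → [0,∞) with f(ξ) ≤ M(1+|ξ|), and ψ_j(x,ξ) := φ_j(x, f(ξ)) with φ_j as in the tangent-line truncation of t^{p(x)} at t = j. Then there is a modulus of continuity ω_j with |ψ_j(x,ξ) − ψ_j(y,ξ)| ≤ ω_j(|x−y|)(1 + |ξ|) for all x,y ∈ Ω̄ and all ξ. -/
open Filter Topology

section AuxLemmas


lemma exp_diff_le' (a b : ℝ) : |Real.exp a - Real.exp b| ≤ Real.exp (max a b) * |a - b| := by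
  wlog h : b ≤ a with H
  · rw [abs_sub_comm, abs_sub_comm a b, max_comm]
    exact H b a (le_of_not_ge h)
  rw [abs_of_nonneg (sub_nonneg.2 (Real.exp_le_exp.2 h)), abs_of_nonneg (sub_nonneg.2 h),
    max_eq_left h]
  have h1 : 1 - Real.exp (b - a) ≤ a - b := by
    have := Real.add_one_le_exp (b - a); linarith
  have h2 : Real.exp a - Real.exp b = Real.exp a * (1 - Real.exp (b - a)) := by
    rw [mul_sub, mul_one, ← Real.exp_add]; ring_nf
  rw [h2]
  exact mul_le_mul_of_nonneg_left h1 (Real.exp_pos a).le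

lemma rpow_abs_sub (s a b P : ℝ) (hs : 1 ≤ s) (ha : a ≤ P) (hb : b ≤ P) :
    |s ^ a - s ^ b| ≤ s ^ P * Real.log s * |a - b| := by
  have hs0 : (0:ℝ) < s := lt_of_lt_of_le one_pos hs
  have hls : 0 ≤ Real.log s := Real.log_nonneg hs
  rw [Real.rpow_def_of_pos hs0, Real.rpow_def_of_pos hs0, Real.rpow_def_of_pos hs0]
  calc |Real.exp (Real.log s * a) - Real.exp (Real.log s * b)|
      ≤ Real.exp (max (Real.log s * a) (Real.log s * b)) * |Real.log s * a - Real.log s * b| :=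
        exp_diff_le' _ _
    _ ≤ Real.exp (Real.log s * P) * (Real.log s * |a - b|) := by
        have hm : max (Real.log s * a) (Real.log s * b) ≤ Real.log s * P :=
          max_le (mul_le_mul_of_nonneg_left ha hls) (mul_le_mul_of_nonneg_left hb hls)
        have he : |Real.log s * a - Real.log s * b| = Real.log s * |a - b| := by
          rw [← mul_sub, abs_mul, abs_of_nonneg hls]
        rw [he]
        exact mul_le_mul (Real.exp_le_exp.2 hm) le_rfl (by positivity) (Real.exp_pos _).le
    _ = Real.exp (Real.log s * P) * Real.log s * |a - b| := by ring

lemma rpow_abs_sub_small (t a b : ℝ) (ht0 : 0 < t) (ht1 : t ≤ 1) (ha : 1 ≤ a) (hb : 1 ≤ b) :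
    |t ^ a - t ^ b| ≤ |a - b| := by
  have hlt : Real.log t ≤ 0 := Real.log_nonpos ht0.le ht1
  rw [Real.rpow_def_of_pos ht0, Real.rpow_def_of_pos ht0]
  have h1 := exp_diff_le' (Real.log t * a) (Real.log t * b)
  have hmax : max (Real.log t * a) (Real.log t * b) ≤ Real.log t :=
    max_le (by nlinarith) (by nlinarith)
  have he : |Real.log t * a - Real.log t * b| = |Real.log t| * |a - b| := by
    rw [← mul_sub, abs_mul]
  have h2 : Real.exp (max (Real.log t * a) (Real.log t * b)) ≤ t := by
    calc Real.exp _ ≤ Real.exp (Real.log t) := Real.exp_le_exp.2 hmax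
      _ = t := Real.exp_log ht0
  have h3 : |Real.log t| * t ≤ 1 := by
    have := Real.abs_log_mul_self_lt t ht0 ht1
    rw [abs_mul, abs_of_nonneg ht0.le] at this
    linarith
  calc |Real.exp (Real.log t * a) - Real.exp (Real.log t * b)|
      ≤ Real.exp (max (Real.log t * a) (Real.log t * b)) * (|Real.log t| * |a - b|) := by
        rw [← he]; exact h1
    _ ≤ t * (|Real.log t| * |a - b|) :=
        mul_le_mul_of_nonneg_right h2 (by positivity)
    _ = (|Real.log t| * t) * |a - b| := by ring
    _ ≤ 1 * |a - b| := mul_le_mul_of_nonneg_right h3 (abs_nonneg _)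
    _ = |a - b| := one_mul _


set_option maxHeartbeats 1000000 in
lemma phi_diff (j pplus q r t : ℝ) (hj : 1 ≤ j) (hq : 1 ≤ q) (hq' : q ≤ pplus)
    (hr : 1 ≤ r) (hr' : r ≤ pplus) (ht : 0 ≤ t) :
    |(if t ≤ j then t ^ q else j ^ q + q * j ^ (q - 1) * (t - j)) -
      (if t ≤ j then t ^ r else j ^ r + r * j ^ (r - 1) * (t - j))|
      ≤ (j ^ pplus * (j + 1 + pplus * j) + 1) * |q - r| * (1 + t) := by
  have hP : (1:ℝ) ≤ pplus := hq.trans hq'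
  have hj0 : (0:ℝ) < j := lt_of_lt_of_le one_pos hj
  have hjP : (1:ℝ) ≤ j ^ pplus := Real.one_le_rpow hj (by linarith)
  have hlogj0 : 0 ≤ Real.log j := Real.log_nonneg hj
  have hlogj : Real.log j ≤ j := by
    have := Real.log_le_sub_one_of_pos hj0; linarith
  have habs : 0 ≤ |q - r| := abs_nonneg _
  set C : ℝ := j ^ pplus * (j + 1 + pplus * j) + 1 with hC
  have h8 : (0:ℝ) ≤ j + 1 + pplus * j := by nlinarith
  have h8' : 0 ≤ j ^ pplus * (j + 1 + pplus * j) := mul_nonneg (by linarith) h8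
  have hC1 : 1 ≤ C := by simp only [hC]; linarith
  have hCjj : j ^ pplus * j ≤ C := by
    have : j ^ pplus * j ≤ j ^ pplus * (j + 1 + pplus * j) := by nlinarith
    simp only [hC]; linarith
  have hCt : 1 ≤ C * (1 + t) := by nlinarith [mul_nonneg (le_trans zero_le_one hC1) ht]
  by_cases htj : t ≤ j
  · rw [if_pos htj, if_pos htj]
    by_cases ht1 : t ≤ 1
    · rcases eq_or_lt_of_le ht with h0 | h0
      · rw [← h0, Real.zero_rpow (by linarith), Real.zero_rpow (by linarith)]
        simp only [sub_zero, abs_zero]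
        positivity
      · have h10 := rpow_abs_sub_small t q r h0 ht1 hq hr
        have h11 : |q - r| * 1 ≤ |q - r| * (C * (1 + t)) :=
          mul_le_mul_of_nonneg_left hCt habs
        nlinarith [h10, h11]
    · push_neg at ht1
      have h1 := rpow_abs_sub t q r pplus ht1.le hq' hr'
      have h2 : t ^ pplus ≤ j ^ pplus := Real.rpow_le_rpow (by linarith) htj (by linarith)
      have h3 : Real.log t ≤ j := (Real.log_le_log (by linarith) htj).trans hlogj
      have h4 : 0 ≤ Real.log t := Real.log_nonneg ht1.le
      have h5 : t ^ pplus * Real.log t * |q - r| ≤ j ^ pplus * j * |q - r| := by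
        have : t ^ pplus * Real.log t ≤ j ^ pplus * j :=
          mul_le_mul h2 h3 h4 (by linarith)
        exact mul_le_mul_of_nonneg_right this habs
      have hfin1 : j ^ pplus * j * |q - r| ≤ C * |q - r| :=
        mul_le_mul_of_nonneg_right hCjj habs
      have hfin2 : C * |q - r| * 1 ≤ C * |q - r| * (1 + t) :=
        mul_le_mul_of_nonneg_left (by linarith) (mul_nonneg (by linarith) habs)
      nlinarith [h1, h5, hfin1, hfin2]
  · push_neg at htj
    rw [if_neg (not_le.2 htj), if_neg (not_le.2 htj)]
    have hA := rpow_abs_sub j q r pplus hj hq' hr'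
    have hB := rpow_abs_sub j (q - 1) (r - 1) pplus hj (by linarith) (by linarith)
    have hBr : |j ^ (q-1) - j ^ (r-1)| ≤ j ^ pplus * Real.log j * |q - r| := by
      have : |(q - 1) - (r - 1)| = |q - r| := by ring_nf
      rwa [this] at hB
    have hjq1 : j ^ (q - 1) ≤ j ^ pplus := Real.rpow_le_rpow_of_exponent_le hj (by linarith)
    have hjq1' : 0 ≤ j ^ (q - 1) := (Real.rpow_pos_of_pos hj0 _).le
    have hslope : |q * j ^ (q-1) - r * j ^ (r-1)| ≤ j ^ pplus * (1 + pplus * j) * |q - r| := by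
      have hdecomp : q * j ^ (q-1) - r * j ^ (r-1)
          = (q - r) * j ^ (q-1) + r * (j ^ (q-1) - j ^ (r-1)) := by ring
      calc |q * j ^ (q-1) - r * j ^ (r-1)|
          ≤ |(q - r) * j ^ (q-1)| + |r * (j ^ (q-1) - j ^ (r-1))| := by
            rw [hdecomp]; exact abs_add_le _ _
        _ = |q - r| * j ^ (q-1) + |r| * |j ^ (q-1) - j ^ (r-1)| := by
            rw [abs_mul, abs_mul, abs_of_nonneg hjq1']
        _ ≤ |q - r| * j ^ pplus + pplus * (j ^ pplus * Real.log j * |q - r|) := by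
            have h6 : |r| = r := abs_of_nonneg (by linarith)
            rw [h6]
            exact add_le_add (mul_le_mul_of_nonneg_left hjq1 habs)
              (mul_le_mul hr' hBr (abs_nonneg _) (by linarith))
        _ ≤ j ^ pplus * (1 + pplus * j) * |q - r| := by
            nlinarith [mul_nonneg (mul_nonneg (mul_nonneg
              (by linarith : (0:ℝ) ≤ pplus) (by linarith : (0:ℝ) ≤ j ^ pplus)) habs)
              (by linarith : (0:ℝ) ≤ j - Real.log j)]
    have hAj : |j ^ q - j ^ r| ≤ j ^ pplus * j * |q - r| := by
      calc |j ^ q - j ^ r| ≤ j ^ pplus * Real.log j * |q - r| := hA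
        _ ≤ j ^ pplus * j * |q - r| := by
            nlinarith [mul_nonneg (mul_nonneg (by linarith : (0:ℝ) ≤ j ^ pplus) habs)
              (by linarith : (0:ℝ) ≤ j - Real.log j)]
    have hsplit : |(j ^ q + q * j ^ (q-1) * (t - j)) - (j ^ r + r * j ^ (r-1) * (t - j))|
        ≤ |j ^ q - j ^ r| + |q * j ^ (q-1) - r * j ^ (r-1)| * (t - j) := by
      have : (j ^ q + q * j ^ (q-1) * (t - j)) - (j ^ r + r * j ^ (r-1) * (t - j))
          = (j ^ q - j ^ r) + (q * j ^ (q-1) - r * j ^ (r-1)) * (t - j) := by ring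
      rw [this]
      calc _ ≤ |j ^ q - j ^ r| + |(q * j ^ (q-1) - r * j ^ (r-1)) * (t - j)| := abs_add_le _ _
        _ = |j ^ q - j ^ r| + |q * j ^ (q-1) - r * j ^ (r-1)| * (t - j) := by
            rw [abs_mul, abs_of_nonneg (by linarith : (0:ℝ) ≤ t - j)]
    have hslopemul : |q * j ^ (q-1) - r * j ^ (r-1)| * (t - j)
        ≤ j ^ pplus * (1 + pplus * j) * |q - r| * t := by
      calc |q * j ^ (q-1) - r * j ^ (r-1)| * (t - j)
          ≤ (j ^ pplus * (1 + pplus * j) * |q - r|) * (t - j) :=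
            mul_le_mul_of_nonneg_right hslope (by linarith)
        _ ≤ _ := by
            have h7 : 0 ≤ j ^ pplus * (1 + pplus * j) * |q - r| := by positivity
            exact mul_le_mul_of_nonneg_left (by linarith) h7
    have hfin1 : j ^ pplus * j * |q - r| ≤ C * |q - r| :=
      mul_le_mul_of_nonneg_right hCjj habs
    have hfin2 : j ^ pplus * (1 + pplus * j) * |q - r| * t ≤ C * |q - r| * t := by
      have h12 : j ^ pplus * (1 + pplus * j) ≤ C := by
        have h13 : (0:ℝ) ≤ j ^ pplus * j := mul_nonneg (by linarith) (by linarith)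
        simp only [hC]; nlinarith [h13]
      have h14 := mul_le_mul_of_nonneg_right
        (mul_le_mul_of_nonneg_right h12 habs) ht
      linarith [h14]
    calc |(j ^ q + q * j ^ (q-1) * (t - j)) - (j ^ r + r * j ^ (r-1) * (t - j))|
        ≤ |j ^ q - j ^ r| + |q * j ^ (q-1) - r * j ^ (r-1)| * (t - j) := hsplit
      _ ≤ j ^ pplus * j * |q - r| + j ^ pplus * (1 + pplus * j) * |q - r| * t := by
          linarith [hAj, hslopemul]
      _ ≤ C * |q - r| + C * |q - r| * t := by linarith
      _ = C * |q - r| * (1 + t) := by ring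

end AuxLemmas

noncomputable section


/-- Tangent-line truncation of `t ↦ t^{p(x)}` at `t = j`. -/
def phiTrunc {X : Type*} (p : X → ℝ) (j : ℝ) (x : X) (t : ℝ) : ℝ :=
  if t ≤ j then t ^ p x else j ^ p x + p x * j ^ (p x - 1) * (t - j)

/-- For `ψ_j(x,ξ) = φ_j(x, f ξ)` with `p` continuous on the (compact) closure of the bounded
set `Ω` and `f` of linear growth, there is a modulus of continuity `ω_j` with
`|ψ_j(x,ξ) − ψ_j(y,ξ)| ≤ ω_j(|x−y|)(1+|ξ|)`. -/
theorem stmt17 (k n : ℕ) (Ω : Set (Fin n → ℝ)) (hΩb : Bornology.IsBounded Ω)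
    (p : (Fin n → ℝ) → ℝ) (hpc : ContinuousOn p (closure Ω)) (pplus : ℝ)
    (hp : ∀ x ∈ closure Ω, 1 ≤ p x ∧ p x ≤ pplus)
    (M : ℝ) (hM : 1 ≤ M) (j : ℕ) (hj : 1 ≤ j)
    (f : EuclideanSpace ℝ (Fin k × Fin n) → ℝ) (hfnn : ∀ ξ, 0 ≤ f ξ)
    (hfg : ∀ ξ, f ξ ≤ M * (1 + ‖ξ‖)) :
    ∃ ω : ℝ → ℝ, (∀ s, 0 ≤ ω s) ∧ Tendsto ω (𝓝[>] (0 : ℝ)) (𝓝 0) ∧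
      ∀ x ∈ closure Ω, ∀ y ∈ closure Ω, ∀ ξ,
        |phiTrunc p (j : ℝ) x (f ξ) - phiTrunc p (j : ℝ) y (f ξ)|
          ≤ ω ‖x - y‖ * (1 + ‖ξ‖) := by
  set K := closure Ω with hK
  rcases K.eq_empty_or_nonempty with hKe | ⟨x0, hx0⟩
  · refine ⟨fun _ => 0, fun _ => le_rfl, tendsto_const_nhds, ?_⟩
    intro x hx
    rw [hKe] at hx
    exact absurd hx (Set.notMem_empty x)
  -- K is nonempty
  have hP1 : (1:ℝ) ≤ pplus := (hp x0 hx0).1.trans (hp x0 hx0).2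
  have hjR : (1:ℝ) ≤ (j:ℝ) := by exact_mod_cast hj
  set C : ℝ := (j:ℝ) ^ pplus * ((j:ℝ) + 1 + pplus * (j:ℝ)) + 1 with hCdef
  have hC0 : 0 ≤ C := by
    have h0 : (0:ℝ) ≤ (j:ℝ) ^ pplus := (Real.rpow_pos_of_pos (by linarith) _).le
    have h1 : (0:ℝ) ≤ (j:ℝ) + 1 + pplus * (j:ℝ) := by nlinarith
    have := mul_nonneg h0 h1
    simp only [hCdef]; linarith
  -- the modulus of continuity of p on K
  set S : ℝ → Set ℝ := fun s =>
    insert (0:ℝ) {d | ∃ x ∈ K, ∃ y ∈ K, dist x y ≤ s ∧ d = |p x - p y|} with hS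
  have hSbdd : ∀ s, ∀ d ∈ S s, d ≤ pplus - 1 := by
    intro s d hd
    rcases hd with rfl | ⟨x, hx, y, hy, _, rfl⟩
    · linarith
    · have h1 := hp x hx
      have h2 := hp y hy
      rw [abs_sub_le_iff]
      constructor <;> linarith
  have hSab : ∀ s, BddAbove (S s) := fun s => ⟨pplus - 1, fun d hd => hSbdd s d hd⟩
  have hSne : ∀ s, (S s).Nonempty := fun s => ⟨0, Set.mem_insert _ _⟩
  set ωp : ℝ → ℝ := fun s => sSup (S s) with hωp
  have hωp_nonneg : ∀ s, 0 ≤ ωp s := fun s => le_csSup (hSab s) (Set.mem_insert _ _)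
  have hωp_mem : ∀ x ∈ K, ∀ y ∈ K, |p x - p y| ≤ ωp (dist x y) := by
    intro x hx y hy
    exact le_csSup (hSab _) (Set.mem_insert_of_mem _ ⟨x, hx, y, hy, le_rfl, rfl⟩)
  -- uniform continuity
  have hKc : IsCompact K := Metric.isCompact_of_isClosed_isBounded isClosed_closure hΩb.closure
  have huc := hKc.uniformContinuousOn_of_continuous hpc
  rw [Metric.uniformContinuousOn_iff] at huc
  have hωp0 : Tendsto ωp (𝓝[>] (0:ℝ)) (𝓝 0) := by
    rw [Metric.tendsto_nhdsWithin_nhds]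
    intro ε hε
    obtain ⟨δ, hδ, hδ'⟩ := huc (ε/2) (half_pos hε)
    refine ⟨δ, hδ, fun s hs hsd => ?_⟩
    have hsδ : s < δ := by
      rw [Real.dist_eq, sub_zero, abs_of_pos hs] at hsd
      exact hsd
    have hle : ωp s ≤ ε / 2 := by
      apply csSup_le (hSne s)
      intro d hd
      rcases hd with rfl | ⟨x, hx, y, hy, hxy, rfl⟩
      · linarith
      · have := hδ' x hx y hy (lt_of_le_of_lt hxy hsδ)
        rw [Real.dist_eq] at this
        linarith
    rw [Real.dist_eq, sub_zero, abs_of_nonneg (hωp_nonneg s)]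
    linarith
  refine ⟨fun s => 2 * M * C * ωp s, ?_, ?_, ?_⟩
  · intro s
    have : 0 ≤ 2 * M * C := by positivity
    exact mul_nonneg this (hωp_nonneg s)
  · have := hωp0.const_mul (2 * M * C)
    simpa using this
  · intro x hx y hy ξ
    have hpx := hp x hx
    have hpy := hp y hy
    have hkey := phi_diff (j:ℝ) pplus (p x) (p y) (f ξ) hjR hpx.1 hpx.2 hpy.1 hpy.2 (hfnn ξ)
    have h1 : |phiTrunc p (j:ℝ) x (f ξ) - phiTrunc p (j:ℝ) y (f ξ)|
        ≤ C * |p x - p y| * (1 + f ξ) := by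
      simpa [phiTrunc, hCdef] using hkey
    have h2 : |p x - p y| ≤ ωp ‖x - y‖ := by
      have := hωp_mem x hx y hy
      rwa [dist_eq_norm] at this
    have h3 : 1 + f ξ ≤ 2 * M * (1 + ‖ξ‖) := by
      have := hfg ξ
      have hn : 0 ≤ ‖ξ‖ := norm_nonneg _
      nlinarith
    have hft : 0 ≤ 1 + f ξ := by linarith [hfnn ξ]
    calc |phiTrunc p (j:ℝ) x (f ξ) - phiTrunc p (j:ℝ) y (f ξ)|
        ≤ C * |p x - p y| * (1 + f ξ) := h1
      _ ≤ C * ωp ‖x - y‖ * (1 + f ξ) :=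
          mul_le_mul_of_nonneg_right (mul_le_mul_of_nonneg_left h2 hC0) hft
      _ ≤ C * ωp ‖x - y‖ * (2 * M * (1 + ‖ξ‖)) :=
          mul_le_mul_of_nonneg_left h3 (mul_nonneg hC0 (hωp_nonneg _))
      _ = 2 * M * C * ωp ‖x - y‖ * (1 + ‖ξ‖) := by ring
end
end
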